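/- For each fixed x ∈ ℝ, as p → 0⁺ one has φ(x,p) → υ·e^x, ∂φ/∂x(x,p) → υ·e^x, and ∂²φ/∂x²(x,p) → υ·e^x. -/

import Mathlib

/-!
Write `Z_c(y) = ∑ₙ υⁿ/n! · exp (y n - c n²)`, so that `φ(·, p) = log Z_{ap/2}`, `∂φ = Z'/Z` and
`∂²φ = (Z'' Z - Z'²)/Z²`, where the `k`-th derivative of `Z_c` is the moment
`M_k = ∑ₙ nᵏ υⁿ/n! · exp (y n - c n²)`. For `c ≥ 0` the terms of `M_k` are dominated by
`(2ᵏ υ eʸ)ⁿ/n!` uniformly in `c`, so `M_k` is continuous in `c` at `0`. At `c = 0` we have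
`M_0 = exp (υ eʸ)`, and differentiating in `y` gives `M_1 = t eᵗ`, `M_2 = (t + t²) eᵗ` with `t = υ eʸ`
(the Poisson moments). The three limits are therefore `log eᵗ = t`, `t eᵗ / eᵗ = t` and
`((t + t²) eᵗ · eᵗ - (t eᵗ)²) / e²ᵗ = t`.
-/

/-- The function `φ(x,p) = ln Σ_{n≥0} (υⁿ/n!)·exp(xn − (ap/2)n²)`. -/
noncomputable def phi (υ a x p : ℝ) : ℝ :=
  Real.log (∑' n : ℕ, (υ ^ n / (Nat.factorial n : ℝ)) *
    Real.exp (x * n - (a * p / 2) * (n : ℝ) ^ 2))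

open Filter Real Set Topology
open scoped Nat

noncomputable section

def weight (υ c y : ℝ) (n : ℕ) : ℝ :=
  υ ^ n / n ! * exp (y * n - c * n ^ 2)

def moment (υ c : ℝ) (k : ℕ) (y : ℝ) : ℝ :=
  ∑' n : ℕ, (n : ℝ) ^ k * weight υ c y n

variable {υ c : ℝ}

lemma weight_nonneg (hυ : 0 ≤ υ) (c y : ℝ) (n : ℕ) : 0 ≤ weight υ c y n := by
  unfold weight
  positivity

lemma pow_mul_weight_le (hυ : 0 ≤ υ) (hc : 0 ≤ c) {y B : ℝ} (hy : y ≤ B) (k n : ℕ) :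
    (n : ℝ) ^ k * weight υ c y n ≤ (2 ^ k * υ * exp B) ^ n / n ! := by
  have hpow : (n : ℝ) ^ k ≤ (2 ^ k) ^ n := by
    rw [← pow_mul, mul_comm, pow_mul]
    gcongr
    exact_mod_cast Nat.lt_two_pow_self.le
  have hexp : exp (y * n - c * n ^ 2) ≤ exp B ^ n := by
    rw [← exp_nat_mul, exp_le_exp, mul_comm]
    nlinarith [mul_le_mul_of_nonneg_left hy (Nat.cast_nonneg n),
      mul_nonneg hc (sq_nonneg (n : ℝ))]
  calc (n : ℝ) ^ k * weight υ c y n ≤ (2 ^ k) ^ n * (υ ^ n / n ! * exp B ^ n) := by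
        unfold weight
        gcongr
    _ = (2 ^ k * υ * exp B) ^ n / n ! := by rw [mul_pow, mul_pow]; ring

lemma summable_pow_mul_weight (hυ : 0 ≤ υ) (hc : 0 ≤ c) (k : ℕ) (y : ℝ) :
    Summable fun n : ℕ => (n : ℝ) ^ k * weight υ c y n :=
  .of_nonneg_of_le (fun n => mul_nonneg (by positivity) (weight_nonneg hυ c y n))
    (pow_mul_weight_le hυ hc le_rfl k) (summable_pow_div_factorial _)

lemma hasDerivAt_weight (υ c : ℝ) (n : ℕ) (y : ℝ) :
    HasDerivAt (fun z => weight υ c z n) (n * weight υ c y n) y := by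
  have h := (((hasDerivAt_id y).mul_const (n : ℝ)).sub_const (c * n ^ 2)).exp.const_mul
    (υ ^ n / n !)
  unfold weight
  exact h.congr_deriv (by simp only [id]; ring)

lemma hasDerivAt_moment (hυ : 0 ≤ υ) (hc : 0 ≤ c) (k : ℕ) (y : ℝ) :
    HasDerivAt (moment υ c k) (moment υ c (k + 1) y) y := by
  have hy : y ∈ Iio (y + 1) := by simp
  refine hasDerivAt_tsum_of_isPreconnected
    (g := fun (n : ℕ) (z : ℝ) => (n : ℝ) ^ k * weight υ c z n)
    (g' := fun (n : ℕ) (z : ℝ) => (n : ℝ) ^ (k + 1) * weight υ c z n)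
    (summable_pow_div_factorial (2 ^ (k + 1) * υ * exp (y + 1)))
    isOpen_Iio isPreconnected_Iio (fun n z _ => ?_) (fun n z hz => ?_) hy
    (summable_pow_mul_weight hυ hc k y) hy
  · exact ((hasDerivAt_weight υ c n z).const_mul _).congr_deriv (by ring)
  · rw [Real.norm_of_nonneg (mul_nonneg (by positivity) (weight_nonneg hυ c z n))]
    exact pow_mul_weight_le hυ hc hz.le (k + 1) n

lemma continuousOn_moment (hυ : 0 ≤ υ) (k : ℕ) (y : ℝ) :
    ContinuousOn (fun c => moment υ c k y) (Ici 0) := by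
  refine continuousOn_tsum (fun n => by unfold weight; fun_prop)
    (summable_pow_div_factorial (2 ^ k * υ * exp y)) fun n c hc => ?_
  rw [Real.norm_of_nonneg (mul_nonneg (by positivity) (weight_nonneg hυ c y n))]
  exact pow_mul_weight_le hυ hc le_rfl k n

lemma moment_pos (hυ : 0 < υ) (hc : 0 ≤ c) (k : ℕ) (y : ℝ) : 0 < moment υ c k y :=
  (summable_pow_mul_weight hυ.le hc k y).tsum_pos
    (fun n => mul_nonneg (by positivity) (weight_nonneg hυ.le c y n)) 1
    (by simp only [Nat.cast_one, one_pow, one_mul, weight]; positivity)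

lemma moment_zero_zero (υ y : ℝ) : moment υ 0 0 y = exp (υ * exp y) := by
  have h := NormedSpace.expSeries_div_hasSum_exp (υ * exp y)
  rw [← exp_eq_exp_ℝ] at h
  rw [← h.tsum_eq, moment]
  congr 1 with n
  rw [weight, mul_pow, ← exp_nat_mul]
  ring_nf

lemma moment_zero_one (hυ : 0 ≤ υ) (y : ℝ) :
    moment υ 0 1 y = υ * exp y * exp (υ * exp y) := by
  have h : HasDerivAt (moment υ 0 0) (exp (υ * exp y) * (υ * exp y)) y := by
    rw [funext (moment_zero_zero υ)]
    exact ((hasDerivAt_exp y).const_mul υ).exp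
  rw [(hasDerivAt_moment hυ le_rfl 0 y).unique h, mul_comm]

lemma moment_zero_two (hυ : 0 ≤ υ) (y : ℝ) :
    moment υ 0 2 y = (υ * exp y + (υ * exp y) ^ 2) * exp (υ * exp y) := by
  have h : HasDerivAt (moment υ 0 1)
      (υ * exp y * exp (υ * exp y) + υ * exp y * (exp (υ * exp y) * (υ * exp y))) y := by
    rw [funext (moment_zero_one hυ)]
    exact ((hasDerivAt_exp y).const_mul υ).mul ((hasDerivAt_exp y).const_mul υ).exp
  rw [(hasDerivAt_moment hυ le_rfl 1 y).unique h]
  ring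

lemma deriv_log_moment (hυ : 0 < υ) (hc : 0 ≤ c) :
    deriv (fun y => log (moment υ c 0 y)) = fun y => moment υ c 1 y / moment υ c 0 y :=
  funext fun y => ((hasDerivAt_moment hυ.le hc 0 y).log (moment_pos hυ hc 0 y).ne').deriv

lemma deriv_deriv_log_moment (hυ : 0 < υ) (hc : 0 ≤ c) (y : ℝ) :
    deriv (deriv fun y => log (moment υ c 0 y)) y =
      (moment υ c 2 y * moment υ c 0 y - moment υ c 1 y * moment υ c 1 y) / moment υ c 0 y ^ 2 := by
  rw [deriv_log_moment hυ hc]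
  exact ((hasDerivAt_moment hυ.le hc 1 y).div (hasDerivAt_moment hυ.le hc 0 y)
    (moment_pos hυ hc 0 y).ne').deriv

end

lemma phi_eq_log_moment (υ a x p : ℝ) :
    phi υ a x p = log (moment υ (a * p / 2) 0 x) := by
  simp [phi, moment, weight]

theorem stmt_14 (υ a : ℝ) (hυ : 0 < υ) (ha : 1 < a) (x : ℝ) :
    Filter.Tendsto (fun p : ℝ => phi υ a x p)
      (nhdsWithin 0 (Set.Ioi 0)) (nhds (υ * Real.exp x)) ∧
    Filter.Tendsto (fun p : ℝ => deriv (fun x' => phi υ a x' p) x)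
      (nhdsWithin 0 (Set.Ioi 0)) (nhds (υ * Real.exp x)) ∧
    Filter.Tendsto (fun p : ℝ => deriv (deriv (fun x' => phi υ a x' p)) x)
      (nhdsWithin 0 (Set.Ioi 0)) (nhds (υ * Real.exp x)) := by
  have hc_tendsto : Tendsto (fun p => a * p / 2) (𝓝[>] 0) (𝓝[≥] 0) := by
    refine tendsto_nhdsWithin_of_tendsto_nhds_of_eventually_within _ ?_ ?_
    · have hcont : Continuous fun p : ℝ => a * p / 2 := by fun_prop
      exact (hcont.tendsto' 0 0 (by simp)).mono_left nhdsWithin_le_nhds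
    · filter_upwards [self_mem_nhdsWithin] with p (hp : 0 < p)
      exact div_nonneg (mul_nonneg (by linarith) hp.le) zero_le_two
  have hm (k : ℕ) : Tendsto (fun p => moment υ (a * p / 2) k x) (𝓝[>] 0) (𝓝 (moment υ 0 k x)) :=
    ((continuousOn_moment hυ.le k x) 0 self_mem_Ici).tendsto.comp hc_tendsto
  have hc_nonneg : ∀ᶠ p in 𝓝[>] 0, 0 ≤ a * p / 2 := hc_tendsto self_mem_nhdsWithin
  have h0 := hm 0
  have h1 := hm 1
  have h2 := hm 2
  rw [moment_zero_zero] at h0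
  rw [moment_zero_one hυ.le] at h1
  rw [moment_zero_two hυ.le] at h2
  set t := υ * exp x
  have hE : exp t ≠ 0 := (exp_pos t).ne'
  simp only [phi_eq_log_moment]
  refine ⟨?_, ?_, ?_⟩
  · simpa only [log_exp] using h0.log hE
  · have h := h1.div h0 hE
    rw [mul_div_cancel_right₀ t hE] at h
    refine h.congr' ?_
    filter_upwards [hc_nonneg] with p hp
    rw [deriv_log_moment hυ hp]
    rfl
  · have h := ((h2.mul h0).sub (h1.mul h1)).div (h0.pow 2) (pow_ne_zero 2 hE)
    rw [show ((t + t ^ 2) * exp t * exp t - t * exp t * (t * exp t)) / exp t ^ 2 = t by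
      field_simp; ring] at h
    refine h.congr' ?_
    filter_upwards [hc_nonneg] with p hp
    rw [deriv_deriv_log_moment hυ hp]
    rfl
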